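/- Let X_1, X_1', X_2, X_2' be mutually independent random variables with X_1' distributed as X_1 and X_2' distributed as X_2, and let f be measurable with f(X_1,X_2) a square-integrable real random variable. Then the symmetrized main-sensitivity-index estimator is unbiased: E[(1/2) * (f(X_1,X_2) - f(X_1',X_2)) * (f(X_1,X_2') - f(X_1',X_2'))] = Var(E(f(X_1,X_2)|X_1)), the right hand side being the main sensitivity index V_1 of f(X_1,X_2) with respect to its first argument. -/

import Mathlib

/-!
Write `g x = E f(x, X₂)` and `νᵢ` for the law of `Xᵢ`. By independence
`E(f(X₁,X₂) | X₁) = g(X₁)`, and the joint law of `((X₁,X₁'),(X₂,X₂'))` is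
`(ν₁ ⊗ ν₁) ⊗ (ν₂ ⊗ ν₂)`. Integrating out `X₂, X₂'` first, the estimator's integrand factors as
`½ u(X₂) u(X₂')` with `u = f(X₁,·) - f(X₁',·)`, so it becomes `½ (g(X₁) - g(X₁'))²`, whose
mean is `Var g(X₁)` because `X₁'` is an independent copy of `X₁`.
-/

open MeasureTheory ProbabilityTheory

section Variance

variable {α : Type*} [MeasurableSpace α] {ν : Measure α} [IsProbabilityMeasure ν]

lemma variance_eq_integral_half_sq_sub_prod {g : α → ℝ} (hg : MemLp g 2 ν) :
    Var[g; ν] = ∫ p, 1 / 2 * (g p.1 - g p.2) ^ 2 ∂(ν.prod ν) := by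
  have hint : Integrable g ν := hg.integrable one_le_two
  have hmean : ∫ p, (g p.1 - g p.2) ∂(ν.prod ν) = 0 := by
    rw [integral_sub (hint.comp_fst ν) (hint.comp_snd ν), integral_fun_fst g, integral_fun_snd g]
    simp
  have hvar : Var[fun p => g p.1 - g p.2; ν.prod ν] = 2 * Var[g; ν] := by
    simpa only [Pi.neg_apply, ← sub_eq_add_neg, variance_neg, two_mul]
      using variance_add_prod hg hg.neg
  rw [integral_const_mul, ← variance_of_integral_eq_zero (by fun_prop) hmean, hvar]
  ring

end Variance

section Product

variable {α β : Type*} [MeasurableSpace α] [MeasurableSpace β]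
  {ν₁ : Measure α} {ν₂ : Measure β} [IsProbabilityMeasure ν₁] [IsProbabilityMeasure ν₂]
  {f : α × β → ℝ}

lemma integrable_symmetrized_prod (hf : MemLp f 2 (ν₁.prod ν₂)) :
    Integrable (fun p : (α × α) × (β × β) => 1 / 2 * (f (p.1.1, p.2.1) - f (p.1.2, p.2.1))
      * (f (p.1.1, p.2.2) - f (p.1.2, p.2.2))) ((ν₁.prod ν₁).prod (ν₂.prod ν₂)) := by
  have hcomp : ∀ {φ : α × α → α} {ψ : β × β → β}, MeasurePreserving φ (ν₁.prod ν₁) ν₁ →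
      MeasurePreserving ψ (ν₂.prod ν₂) ν₂ →
      MemLp (fun p : (α × α) × (β × β) => f (φ p.1, ψ p.2)) 2
        ((ν₁.prod ν₁).prod (ν₂.prod ν₂)) :=
    fun hφ hψ => hf.comp_measurePreserving (hφ.prod hψ)
  have hdiff₁ := (hcomp measurePreserving_fst measurePreserving_fst).sub
    (hcomp measurePreserving_snd measurePreserving_fst)
  have hdiff₂ := (hcomp measurePreserving_fst measurePreserving_snd).sub
    (hcomp measurePreserving_snd measurePreserving_snd)
  simpa only [mul_assoc, Pi.mul_apply, Pi.sub_apply]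
    using (hdiff₁.integrable_mul hdiff₂).const_mul (1 / 2)

lemma integral_symmetrized_prod (hf : MemLp f 2 (ν₁.prod ν₂)) :
    ∫ p, 1 / 2 * (f (p.1.1, p.2.1) - f (p.1.2, p.2.1)) * (f (p.1.1, p.2.2) - f (p.1.2, p.2.2))
        ∂((ν₁.prod ν₁).prod (ν₂.prod ν₂))
      = ∫ a, 1 / 2 * ((∫ y, f (a.1, y) ∂ν₂) - ∫ y, f (a.2, y) ∂ν₂) ^ 2 ∂(ν₁.prod ν₁) := by
  rw [integral_prod _ (integrable_symmetrized_prod hf)]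
  refine integral_congr_ae ?_
  have hslice : ∀ᵐ x ∂ν₁, Integrable (fun y => f (x, y)) ν₂ :=
    (hf.integrable one_le_two).prod_right_ae
  filter_upwards [measurePreserving_fst.quasiMeasurePreserving.ae hslice,
    measurePreserving_snd.quasiMeasurePreserving.ae hslice] with a h₁ h₂
  set u : β → ℝ := fun y => f (a.1, y) - f (a.2, y)
  calc ∫ y, 1 / 2 * (f (a.1, y.1) - f (a.2, y.1)) * (f (a.1, y.2) - f (a.2, y.2)) ∂(ν₂.prod ν₂)
      = 1 / 2 * ∫ y, u y.1 * u y.2 ∂(ν₂.prod ν₂) := by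
        rw [← integral_const_mul]
        simp only [u, mul_assoc]
    _ = 1 / 2 * (∫ y, u y ∂ν₂) ^ 2 := by rw [integral_prod_mul, sq]
    _ = _ := by rw [integral_sub h₁ h₂]

end Product

section Independence

variable {Ω α β : Type*} [MeasurableSpace Ω] [MeasurableSpace α] [MeasurableSpace β]
  {μ : Measure Ω} [IsFiniteMeasure μ]

lemma ProbabilityTheory.IndepFun.map_prodMk_eq_prod_self {X X' : Ω → α} (hX : Measurable X)
    (hX' : Measurable X') (hind : IndepFun X X' μ) (hid : IdentDistrib X' X μ μ) :
    μ.map (fun ω => (X ω, X' ω)) = (μ.map X).prod (μ.map X) := by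
  rw [(indepFun_iff_map_prod_eq_prod_map_map hX.aemeasurable hX'.aemeasurable).1 hind,
    hid.map_eq]

lemma map_prodMk_prodMk_eq_prod_prod {X X' : Ω → α} {Y Y' : Ω → β} (hX : Measurable X)
    (hX' : Measurable X') (hY : Measurable Y) (hY' : Measurable Y')
    (hXX' : IndepFun X X' μ) (hYY' : IndepFun Y Y' μ)
    (hind : IndepFun (fun ω => (X ω, X' ω)) (fun ω => (Y ω, Y' ω)) μ)
    (hidX : IdentDistrib X' X μ μ) (hidY : IdentDistrib Y' Y μ μ) :
    μ.map (fun ω => ((X ω, X' ω), (Y ω, Y' ω)))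
      = ((μ.map X).prod (μ.map X)).prod ((μ.map Y).prod (μ.map Y)) := by
  rw [(indepFun_iff_map_prod_eq_prod_map_map (hX.prodMk hX').aemeasurable
      (hY.prodMk hY').aemeasurable).1 hind, hXX'.map_prodMk_eq_prod_self hX hX' hidX,
    hYY'.map_prodMk_eq_prod_self hY hY' hidY]

lemma condExp_comap_ae_eq_integral_of_indepFun {X : Ω → α} {Y : Ω → β}
    (hX : Measurable X) (hY : Measurable Y) (hXY : IndepFun X Y μ) {f : α × β → ℝ}
    (hf : Measurable f) (hfXY : Integrable (fun ω => f (X ω, Y ω)) μ) :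
    μ[fun ω => f (X ω, Y ω) | MeasurableSpace.comap X inferInstance]
      =ᵐ[μ] fun ω => ∫ y, f (X ω, y) ∂(μ.map Y) := by
  have hlaw : μ.map (fun ω => (X ω, Y ω)) = (μ.map X).prod (μ.map Y) :=
    (indepFun_iff_map_prod_eq_prod_map_map hX.aemeasurable hY.aemeasurable).1 hXY
  have hfint : Integrable f ((μ.map X).prod (μ.map Y)) := by
    rw [← hlaw]
    exact (integrable_map_measure hf.aestronglyMeasurable (hX.prodMk hY).aemeasurable).2 hfXY
  have hg : StronglyMeasurable fun x => ∫ y, f (x, y) ∂(μ.map Y) :=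
    hf.stronglyMeasurable.integral_prod_right'
  have hgX : Integrable (fun ω => ∫ y, f (X ω, y) ∂(μ.map Y)) μ :=
    (integrable_map_measure hg.aestronglyMeasurable hX.aemeasurable).1 hfint.integral_prod_left
  refine (ae_eq_condExp_of_forall_setIntegral_eq hX.comap_le hfXY
    (fun _ _ _ => hgX.integrableOn) ?_ ?_).symm
  · rintro _ ⟨t, ht, rfl⟩ -
    calc ∫ ω in X ⁻¹' t, ∫ y, f (X ω, y) ∂(μ.map Y) ∂μ
        = ∫ x in t, ∫ y, f (x, y) ∂(μ.map Y) ∂(μ.map X) :=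
          (setIntegral_map ht hg.aestronglyMeasurable hX.aemeasurable).symm
      _ = ∫ p in t ×ˢ Set.univ, f p ∂((μ.map X).prod (μ.map Y)) := by
          rw [setIntegral_prod f hfint.integrableOn]
          simp only [Measure.restrict_univ]
      _ = ∫ ω in X ⁻¹' t, f (X ω, Y ω) ∂μ := by
          rw [← hlaw, setIntegral_map (ht.prod MeasurableSet.univ) hf.aestronglyMeasurable
            (hX.prodMk hY).aemeasurable, Set.mk_preimage_prod, Set.preimage_univ,
            Set.inter_univ]
  · exact (hg.comp_measurable (measurable_iff_comap_le.2 le_rfl)).aestronglyMeasurable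

end Independence

/-- Unbiasedness of the symmetrized estimator of the main sensitivity index: for
`X₁, X₁', X₂, X₂'` mutually independent with `X₁' ~ X₁`, `X₂' ~ X₂` and `f(X₁,X₂)`
square-integrable,
`E[(1/2)(f(X₁,X₂) - f(X₁',X₂))(f(X₁,X₂') - f(X₁',X₂'))] = Var(E(f(X₁,X₂)|X₁)) = V₁`. -/
theorem symmetrized_main_index_estimator_unbiased
    {Ω α β : Type*} [MeasurableSpace Ω] [MeasurableSpace α] [MeasurableSpace β]
    (μ : Measure Ω) [IsProbabilityMeasure μ]
    (X1 X1' : Ω → α) (X2 X2' : Ω → β)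
    (hX1 : Measurable X1) (hX1' : Measurable X1')
    (hX2 : Measurable X2) (hX2' : Measurable X2')
    (h11 : IndepFun X1 X1' μ) (h22 : IndepFun X2 X2' μ)
    (h12 : IndepFun (fun ω => (X1 ω, X1' ω)) (fun ω => (X2 ω, X2' ω)) μ)
    (hid1 : IdentDistrib X1' X1 μ μ) (hid2 : IdentDistrib X2' X2 μ μ)
    (f : α × β → ℝ) (hf : Measurable f)
    (hf2 : MemLp (fun ω => f (X1 ω, X2 ω)) 2 μ) :
    ∫ ω, (1 / 2 : ℝ) * (f (X1 ω, X2 ω) - f (X1' ω, X2 ω))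
        * (f (X1 ω, X2' ω) - f (X1' ω, X2' ω)) ∂μ
      = variance (μ[(fun ω' => f (X1 ω', X2 ω')) | MeasurableSpace.comap X1 inferInstance]) μ := by
  have := Measure.isProbabilityMeasure_map (μ := μ) hX1.aemeasurable
  have := Measure.isProbabilityMeasure_map (μ := μ) hX2.aemeasurable
  have hind12 : IndepFun X1 X2 μ := h12.comp measurable_fst measurable_fst
  have hlaw : μ.map (fun ω => (X1 ω, X2 ω)) = (μ.map X1).prod (μ.map X2) :=
    (indepFun_iff_map_prod_eq_prod_map_map hX1.aemeasurable hX2.aemeasurable).1 hind12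
  have hjoint := map_prodMk_prodMk_eq_prod_prod hX1 hX1' hX2 hX2' h11 h22 h12 hid1 hid2
  have hfL2 : MemLp f 2 ((μ.map X1).prod (μ.map X2)) := by
    rw [← hlaw]
    exact (memLp_map_measure_iff hf.aestronglyMeasurable (hX1.prodMk hX2).aemeasurable).2 hf2
  have hce := condExp_comap_ae_eq_integral_of_indepFun hX1 hX2 hind12 hf
    (hf2.integrable one_le_two)
  -- `g ∘ X1` is a version of a conditional expectation of an L² function, hence is in L².
  have hgL2 : MemLp (fun x => ∫ y, f (x, y) ∂(μ.map X2)) 2 (μ.map X1) :=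
    (memLp_map_measure_iff hf.stronglyMeasurable.integral_prod_right'.aestronglyMeasurable
      hX1.aemeasurable).2 ((hf2.condExp one_le_two).ae_eq hce)
  calc _ = ∫ p, 1 / 2 * (f (p.1.1, p.2.1) - f (p.1.2, p.2.1))
          * (f (p.1.1, p.2.2) - f (p.1.2, p.2.2))
          ∂((μ.map X1).prod (μ.map X1)).prod ((μ.map X2).prod (μ.map X2)) := by
        rw [← hjoint, integral_map ((hX1.prodMk hX1').prodMk (hX2.prodMk hX2')).aemeasurable
          (hjoint ▸ (integrable_symmetrized_prod hfL2).1)]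
    _ = Var[fun x => ∫ y, f (x, y) ∂(μ.map X2); μ.map X1] := by
        rw [integral_symmetrized_prod hfL2, variance_eq_integral_half_sq_sub_prod hgL2]
    _ = _ := by
        rw [variance_map hgL2.aestronglyMeasurable.aemeasurable hX1.aemeasurable,
          variance_congr hce]
        rfl
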